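/- Let n, l be positive natural numbers, A and Θ n×n real matrices, B an n×1 real matrix, K a 1×n real matrix, D an n×l real matrix, τ > 0, γ > 0, f̄ ≥ 0 real numbers, and P a symmetric n×n real matrix such that P − γI is positive definite and the block matrix [[(A+BKΘ)ᵀP + P(A+BKΘ) + τP, PD], [DᵀP, −τI_l]] is negative definite. Let f : ℝ → ℝˡ satisfy |f(t)|² ≤ f̄ for all t ≥ 0 and let x : ℝ → ℝⁿ be differentiable with x′(t) = (A+BKΘ)x(t) + D f(t) for all t ≥ 0. Then limsup_{t→∞} |x(t)| ≤ √(f̄/γ). -/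

import Mathlib

open Matrix Filter

/-- A real matrix is negative definite (as a quadratic form) if `zᵀ M z < 0`
for every nonzero vector `z`. -/
def NegDefQF {m : Type*} [Fintype m] (M : Matrix m m ℝ) : Prop :=
  ∀ z : m → ℝ, z ≠ 0 → z ⬝ᵥ M *ᵥ z < 0

/-- Euclidean norm of a vector in `ℝⁿ`. -/
noncomputable def euclidNorm {n : ℕ} (v : Fin n → ℝ) : ℝ :=
  Real.sqrt (∑ i, v i ^ 2)

/-!
`V(z) = zᵀ P z` is a Lyapunov function for the closed loop. Evaluating the negative definite
block form at `(x(t), f(t))` (the S-procedure) gives `V' ≤ -τ V + τ |f|² ≤ -τ V + τ f̄`, so by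
Grönwall `V(x(t)) ≤ f̄ + (V(x(0)) - f̄) e^{-τt}`. Since `P - γI ≻ 0` gives `γ |z|² ≤ V(z)`,
`|x(t)|` is bounded by `√((f̄ + (V(x(0)) - f̄) e^{-τt}) / γ)`, which tends to `√(f̄/γ)`.
-/

open Topology

theorem dotProduct_self_eq_sum_sq {m R : Type*} [Fintype m] [CommSemiring R] (v : m → R) :
    v ⬝ᵥ v = ∑ i, v i ^ 2 := by
  simp only [dotProduct, sq]

theorem mulVec_dotProduct {m k R : Type*} [Fintype m] [Fintype k] [CommSemiring R]
    (M : Matrix m k R) (v : k → R) (y : m → R) : (M *ᵥ v) ⬝ᵥ y = v ⬝ᵥ Mᵀ *ᵥ y := by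
  rw [← vecMul_transpose, ← dotProduct_mulVec]

theorem sumElim_dotProduct_fromBlocks_mulVec_sumElim {m k R : Type*} [Fintype m] [Fintype k]
    [NonUnitalNonAssocSemiring R] (A : Matrix m m R) (B : Matrix m k R) (C : Matrix k m R)
    (E : Matrix k k R) (v : m → R) (w : k → R) :
    Sum.elim v w ⬝ᵥ fromBlocks A B C E *ᵥ Sum.elim v w =
      v ⬝ᵥ A *ᵥ v + v ⬝ᵥ B *ᵥ w + (w ⬝ᵥ C *ᵥ v + w ⬝ᵥ E *ᵥ w) := by
  simp only [fromBlocks_mulVec, sumElim_dotProduct_sumElim, dotProduct_add, Sum.elim_comp_inl,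
    Sum.elim_comp_inr]

theorem NegDefQF.dotProduct_mulVec_nonpos {m : Type*} [Fintype m] {M : Matrix m m ℝ}
    (hM : NegDefQF M) (z : m → ℝ) : z ⬝ᵥ M *ᵥ z ≤ 0 := by
  rcases eq_or_ne z 0 with rfl | hz
  · simp
  · exact (hM z hz).le

theorem mul_dotProduct_self_le_of_posDef_sub {m : Type*} [Fintype m] [DecidableEq m]
    {P : Matrix m m ℝ} {γ : ℝ} (hP : ∀ z : m → ℝ, z ≠ 0 → 0 < z ⬝ᵥ (P - γ • 1) *ᵥ z)
    (v : m → ℝ) : γ * (v ⬝ᵥ v) ≤ v ⬝ᵥ P *ᵥ v := by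
  rcases eq_or_ne v 0 with rfl | hv
  · simp
  · have h := hP v hv
    simp only [sub_mulVec, dotProduct_sub, smul_mulVec, one_mulVec, dotProduct_smul,
      smul_eq_mul] at h
    linarith

theorem HasDerivAt.dotProduct {m : Type*} [Fintype m] {x y : ℝ → m → ℝ} {x' y' : m → ℝ}
    {t : ℝ} (hx : HasDerivAt x x' t) (hy : HasDerivAt y y' t) :
    HasDerivAt (fun s => x s ⬝ᵥ y s) (x' ⬝ᵥ y t + x t ⬝ᵥ y') t := by
  have h := HasDerivAt.fun_sum (u := Finset.univ) fun i _ =>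
    (hasDerivAt_pi.mp hx i).fun_mul (hasDerivAt_pi.mp hy i)
  rwa [Finset.sum_add_distrib] at h

theorem HasDerivAt.mulVec {m k : Type*} [Fintype m] [Fintype k] (M : Matrix k m ℝ)
    {x : ℝ → m → ℝ} {x' : m → ℝ} {t : ℝ} (hx : HasDerivAt x x' t) :
    HasDerivAt (fun s => M *ᵥ x s) (M *ᵥ x') t :=
  (LinearMap.toContinuousLinearMap M.mulVecLin).hasFDerivAt.comp_hasDerivAt t hx

theorem HasDerivAt.quadForm {m : Type*} [Fintype m] (P : Matrix m m ℝ) {x : ℝ → m → ℝ}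
    {x' : m → ℝ} {t : ℝ} (hx : HasDerivAt x x' t) :
    HasDerivAt (fun s => x s ⬝ᵥ P *ᵥ x s) (x' ⬝ᵥ P *ᵥ x t + x t ⬝ᵥ P *ᵥ x') t :=
  hx.dotProduct (hx.mulVec P)

theorem le_gronwallBound_of_hasDerivAt {f f' : ℝ → ℝ} {K ε a : ℝ}
    (hf : ∀ t ≥ a, HasDerivAt f (f' t) t) (bound : ∀ t ≥ a, f' t ≤ K * f t + ε)
    {t : ℝ} (ht : a ≤ t) : f t ≤ gronwallBound (f a) K ε (t - a) := by
  refine le_gronwallBound_of_liminf_deriv_right_le (f' := f') (b := t)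
    (fun s hs => (hf s hs.1).continuousAt.continuousWithinAt) ?_ le_rfl
    (fun s hs => bound s hs.1) t ⟨ht, le_rfl⟩
  intro s hs r hr
  refine ((hf s hs.1).hasDerivWithinAt.liminf_right_slope_le hr).mono fun z hz => ?_
  rwa [slope_def_field, div_eq_inv_mul] at hz

theorem gronwallBound_neg_mul {τ : ℝ} (hτ : τ ≠ 0) (δ c t : ℝ) :
    gronwallBound δ (-τ) (τ * c) t = c + (δ - c) * Real.exp (-τ * t) := by
  rw [gronwallBound_of_K_ne_0 (neg_ne_zero.mpr hτ)]
  field_simp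
  ring

theorem quadForm_deriv_le_of_negDefQF {m k : Type*} [Fintype m] [Fintype k] [DecidableEq k]
    {M P : Matrix m m ℝ} {D : Matrix m k ℝ} {τ : ℝ}
    (hLMI : NegDefQF (fromBlocks (Mᵀ * P + P * M + τ • P) (P * D) (Dᵀ * P) ((-τ) • 1)))
    (v : m → ℝ) (w : k → ℝ) :
    (M *ᵥ v + D *ᵥ w) ⬝ᵥ P *ᵥ v + v ⬝ᵥ P *ᵥ (M *ᵥ v + D *ᵥ w) ≤
      -τ * (v ⬝ᵥ P *ᵥ v) + τ * (w ⬝ᵥ w) := by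
  have h := hLMI.dotProduct_mulVec_nonpos (Sum.elim v w)
  rw [sumElim_dotProduct_fromBlocks_mulVec_sumElim] at h
  simp only [add_mulVec, mulVec_add, dotProduct_add, add_dotProduct, mulVec_dotProduct,
    smul_mulVec, dotProduct_smul, ← mulVec_mulVec, one_mulVec, smul_eq_mul] at h ⊢
  linarith

theorem quadForm_le_of_hasDerivAt_closedLoop {m k : Type*} [Fintype m] [Fintype k]
    [DecidableEq k] {M P : Matrix m m ℝ} {D : Matrix m k ℝ} {τ c : ℝ} (hτ : 0 < τ)
    (hLMI : NegDefQF (fromBlocks (Mᵀ * P + P * M + τ • P) (P * D) (Dᵀ * P) ((-τ) • 1)))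
    {w : ℝ → k → ℝ} (hw : ∀ t ≥ (0 : ℝ), w t ⬝ᵥ w t ≤ c) {x : ℝ → m → ℝ}
    (hx : ∀ t ≥ (0 : ℝ), HasDerivAt x (M *ᵥ x t + D *ᵥ w t) t) {t : ℝ} (ht : 0 ≤ t) :
    x t ⬝ᵥ P *ᵥ x t ≤ c + (x 0 ⬝ᵥ P *ᵥ x 0 - c) * Real.exp (-τ * t) := by
  have h := le_gronwallBound_of_hasDerivAt (K := -τ) (ε := τ * c)
    (fun s hs => (hx s hs).quadForm P)
    (fun s hs => (quadForm_deriv_le_of_negDefQF hLMI (x s) (w s)).trans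
      (add_le_add_right (mul_le_mul_of_nonneg_left (hw s hs) hτ.le) _)) ht
  rwa [sub_zero, gronwallBound_neg_mul hτ.ne'] at h

theorem stmt_16_general (n l : ℕ)
    (A Θ : Matrix (Fin n) (Fin n) ℝ) (B : Matrix (Fin n) (Fin 1) ℝ)
    (K : Matrix (Fin 1) (Fin n) ℝ) (D : Matrix (Fin n) (Fin l) ℝ)
    (τ γ fbar : ℝ) (hτ : 0 < τ) (hγ : 0 < γ)
    (P : Matrix (Fin n) (Fin n) ℝ)
    (hPγ : ∀ z : Fin n → ℝ, z ≠ 0 →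
      0 < z ⬝ᵥ (P - γ • (1 : Matrix (Fin n) (Fin n) ℝ)) *ᵥ z)
    (hLMI : NegDefQF (Matrix.fromBlocks
      ((A + B * K * Θ)ᵀ * P + P * (A + B * K * Θ) + τ • P)
      (P * D) (Dᵀ * P) ((-τ) • (1 : Matrix (Fin l) (Fin l) ℝ))))
    (f : ℝ → Fin l → ℝ) (hfb : ∀ t ≥ (0 : ℝ), ∑ i, (f t i) ^ 2 ≤ fbar)
    (x : ℝ → Fin n → ℝ)
    (hx : ∀ t ≥ (0 : ℝ), HasDerivAt x ((A + B * K * Θ) *ᵥ x t + D *ᵥ f t) t) :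
    limsup (fun t => euclidNorm (x t)) atTop ≤ Real.sqrt (fbar / γ) := by
  set V₀ := x 0 ⬝ᵥ P *ᵥ x 0
  set bound : ℝ → ℝ := fun t => Real.sqrt ((fbar + (V₀ - fbar) * Real.exp (-τ * t)) / γ)
  have hx_le : ∀ t ≥ (0 : ℝ), euclidNorm (x t) ≤ bound t := fun t ht => by
    have hV := quadForm_le_of_hasDerivAt_closedLoop hτ hLMI
      (fun s hs => (dotProduct_self_eq_sum_sq (f s)).trans_le (hfb s hs)) hx ht
    have hγV := mul_dotProduct_self_le_of_posDef_sub hPγ (x t)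
    rw [euclidNorm, ← dotProduct_self_eq_sum_sq]
    exact Real.sqrt_le_sqrt ((le_div_iff₀ hγ).mpr (by linarith))
  have hbound : Tendsto bound atTop (𝓝 (Real.sqrt (fbar / γ))) := by
    have hexp : Tendsto (fun t => Real.exp (-τ * t)) atTop (𝓝 0) :=
      Real.tendsto_exp_atBot.comp (tendsto_id.const_mul_atTop_of_neg (neg_lt_zero.mpr hτ))
    simpa only [mul_zero, add_zero] using
      (((hexp.const_mul (V₀ - fbar)).const_add fbar).div_const γ).sqrt
  calc limsup (fun t => euclidNorm (x t)) atTop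
      ≤ limsup bound atTop :=
        limsup_le_limsup (eventually_atTop.mpr ⟨0, hx_le⟩)
          (isCoboundedUnder_le_of_le atTop fun t => Real.sqrt_nonneg _)
          hbound.isBoundedUnder_le
    _ = Real.sqrt (fbar / γ) := hbound.limsup_eq

/-- the ultimate-bound estimate associated with the optimization
problem of Section 4: feasibility of the LMI with `P − γI ≻ 0` yields
`limsup |x(t)| ≤ √(f̄/γ)` for the closed loop `x' = (A + BKΘ)x + Df`. -/
theorem stmt_16 (n l : ℕ) (hn : 0 < n) (hl : 0 < l)
    (A Θ : Matrix (Fin n) (Fin n) ℝ) (B : Matrix (Fin n) (Fin 1) ℝ)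
    (K : Matrix (Fin 1) (Fin n) ℝ) (D : Matrix (Fin n) (Fin l) ℝ)
    (τ γ fbar : ℝ) (hτ : 0 < τ) (hγ : 0 < γ) (hf : 0 ≤ fbar)
    (P : Matrix (Fin n) (Fin n) ℝ) (hPsymm : P.IsSymm)
    (hPγ : ∀ z : Fin n → ℝ, z ≠ 0 →
      0 < z ⬝ᵥ (P - γ • (1 : Matrix (Fin n) (Fin n) ℝ)) *ᵥ z)
    (hLMI : NegDefQF (Matrix.fromBlocks
      ((A + B * K * Θ)ᵀ * P + P * (A + B * K * Θ) + τ • P)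
      (P * D) (Dᵀ * P) ((-τ) • (1 : Matrix (Fin l) (Fin l) ℝ))))
    (f : ℝ → Fin l → ℝ) (hfb : ∀ t ≥ (0 : ℝ), ∑ i, (f t i) ^ 2 ≤ fbar)
    (x : ℝ → Fin n → ℝ)
    (hx : ∀ t ≥ (0 : ℝ), HasDerivAt x ((A + B * K * Θ) *ᵥ x t + D *ᵥ f t) t) :
    limsup (fun t => euclidNorm (x t)) atTop ≤ Real.sqrt (fbar / γ) :=
  stmt_16_general n l A Θ B K D τ γ fbar hτ hγ P hPγ hLMI f hfb x hx
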